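/- Let A be the n×n matrix of a right-admissible OBP coming from the rectangular decomposition, and S the n×n intersection matrix defined by S_{ii} = 0, S_{ij} = 0 if σ preserves the relative order of i and j, and S_{ij} = +1 for i < j, S_{ij} = −1 for i > j when σ reverses their relative order. Then S is antisymmetric and, when A arises from an OF pseudo-Anosov map as in the paper, A S Aᵀ = S. -/
import Mathlib


/-- An ordered block permutation (OBP) datum: a permutation `σ` of the `n` blocks,
block sizes `k i ≥ 1`, a block-index function `β` on the strands `{1,…,K}` (1-indexed),
and the map `τ` given by the defining formula of the paper. -/
structure OBP (n : ℕ) where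
  σ : Equiv.Perm (Fin n)
  k : Fin n → ℕ
  hk : ∀ i, 0 < k i
  β : ℕ → Fin n
  τ : ℕ → ℕ
  hβ : ∀ j : ℕ, 1 ≤ j → j ≤ ∑ i, k i →
    (∑ r ∈ Finset.Iio (β j), k r) < j ∧ j ≤ (∑ r ∈ Finset.Iio (β j), k r) + k (β j)
  hτ : ∀ j : ℕ, 1 ≤ j → j ≤ ∑ i, k i →
    τ j = j + (∑ i ∈ Finset.Iio (σ (β j)), k (σ.symm i)) - ∑ i ∈ Finset.Iio (β j), k i

namespace OBP

variable {n : ℕ} (P : OBP n)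

/-- Total number of strands. -/
def K : ℕ := ∑ i, P.k i

/-- Number of strands in blocks before block `i`. -/
def start (i : Fin n) : ℕ := ∑ r ∈ Finset.Iio i, P.k r

/-- Block `B i` as a set of strands. -/
def B (i : Fin n) : Finset ℕ := Finset.Icc (P.start i + 1) (P.start i + P.k i)

/-- Top strand of block `i` (its least element). -/
def top (i : Fin n) : ℕ := P.start i + 1

/-- Bottom strand of block `i` (its largest element). -/
def bot (i : Fin n) : ℕ := P.start i + P.k i

end OBP

/-- The strand (1-indexed) corresponding to `i : Fin n`. -/
def strand {n : ℕ} (i : Fin n) : ℕ := (i : ℕ) + 1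

/-- Orbit data for an OBP: for each `i`, `m i` is the least `m ≥ 1` such that the `m`-th
iterate of `τ` starting at strand `i` lands back in `{1,…,n}`. -/
structure OrbitData {n : ℕ} (P : OBP n) where
  m : Fin n → ℕ
  hm_pos : ∀ i, 1 ≤ m i
  hm_ret : ∀ i, 1 ≤ P.τ^[m i] (strand i) ∧ P.τ^[m i] (strand i) ≤ n
  hm_min : ∀ i j, 1 ≤ j → j < m i → ¬ P.τ^[j] (strand i) ≤ n

namespace OrbitData

variable {n : ℕ} {P : OBP n} (D : OrbitData P)

/-- The orbit `O i` of strand `i` until (excluding) its first return to `{1,…,n}`. -/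
def O (i : Fin n) : Finset ℕ := (Finset.range (D.m i)).image fun j => P.τ^[j] (strand i)

/-- The matrix `a i j = |O i ∩ B j|`. -/
def A : Matrix (Fin n) (Fin n) ℕ := fun i j => (D.O i ∩ P.B j).card

end OrbitData

/-- The index of the last block, `n` in the paper's 1-indexed notation. -/
def lastIdx (n : ℕ) (hn : 0 < n) : Fin n := ⟨n - 1, Nat.sub_lt hn Nat.one_pos⟩

/-- Admissibility of an OBP, following Definition 3.2 of the paper. -/
structure Admissible {n : ℕ} (hn : 0 < n) (P : OBP n) (D : OrbitData P) : Prop where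
  /-- (i) the orbits cover all strands -/
  cover : Finset.univ.biUnion D.O = Finset.Icc 1 P.K
  /-- (ii) the first-return map to `{1,…,n}` equals `σ` -/
  firstRet : ∀ i, P.τ^[D.m i] (strand i) = strand (P.σ i)
  /-- (iii) the matrix `A` is irreducible -/
  irred : ∀ i j, ∃ N, 0 < (D.A ^ N) i j
  /-- (iv) each orbit `O i` contains the top strand of `B i` … -/
  top_mem : ∀ i, P.top i ∈ D.O i
  /-- (iv) … and the bottom strand of `B i`, except possibly for blocks `n` and `σ⁻¹(n)` … -/
  bot_mem : ∀ i, i ≠ lastIdx n hn → i ≠ P.σ.symm (lastIdx n hn) → P.bot i ∈ D.O i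
  /-- (iv) … whose two bottom strands belong to just one of the orbits `O (σ⁻¹ n)` (left of `z₁`)
  or `O n` (right of `z₁`). -/
  excep : Xor'
    (P.bot (lastIdx n hn) ∈ D.O (P.σ.symm (lastIdx n hn)) ∧
      P.bot (P.σ.symm (lastIdx n hn)) ∈ D.O (P.σ.symm (lastIdx n hn)))
    (P.bot (lastIdx n hn) ∈ D.O (lastIdx n hn) ∧
      P.bot (P.σ.symm (lastIdx n hn)) ∈ D.O (lastIdx n hn))

/-- The intersection matrix `S` of the permutation `σ`: `S i j = 0` if `i = j` or `σ`
preserves the relative order of `i` and `j`; otherwise `S i j = 1` if `i < j` and `−1`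
if `i > j`. -/
def interMatrix {n : ℕ} (σ : Equiv.Perm (Fin n)) : Matrix (Fin n) (Fin n) ℤ :=
  fun i j =>
    if i = j then 0
    else if (i < j ↔ σ i < σ j) then 0
    else if i < j then 1 else -1

section Aux

open Finset

variable {n : ℕ}

private def gsgn (x y : ℕ) : ℤ := if x < y then 1 else if y < x then -1 else 0

private lemma gsgn_lt {x y : ℕ} (h : x < y) : gsgn x y = 1 := by
  unfold gsgn; split_ifs <;> omega

private lemma gsgn_gt {x y : ℕ} (h : y < x) : gsgn x y = -1 := by
  unfold gsgn; split_ifs <;> omega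

private lemma gsgn_congr {x y a b : ℕ} (h1 : x < y ↔ a < b) (h2 : y < x ↔ b < a) :
    gsgn x y = gsgn a b := by
  unfold gsgn; split_ifs <;> omega

private lemma interMatrix_mul_two (σ : Equiv.Perm (Fin n)) (a b : Fin n) :
    2 * interMatrix σ a b = gsgn (a : ℕ) (b : ℕ) - gsgn (σ a : ℕ) (σ b : ℕ) := by
  have hinj : ((σ a : ℕ) = (σ b : ℕ)) ↔ ((a : ℕ) = (b : ℕ)) := by
    constructor
    · intro h
      exact congrArg Fin.val (σ.injective (Fin.val_injective h))
    · intro h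
      exact congrArg Fin.val (congrArg σ (Fin.val_injective h))
  unfold interMatrix gsgn
  simp only [Fin.lt_def, Fin.ext_iff]
  split_ifs <;> omega

private lemma interMatrix_transpose (σ : Equiv.Perm (Fin n)) :
    (interMatrix σ).transpose = -interMatrix σ := by
  ext a b
  simp only [Matrix.transpose_apply, Matrix.neg_apply]
  have h1 := interMatrix_mul_two σ a b
  have h2 := interMatrix_mul_two σ b a
  have g1 : gsgn (a : ℕ) (b : ℕ) = - gsgn (b : ℕ) (a : ℕ) := by
    unfold gsgn; split_ifs <;> omega
  have g2 : gsgn (σ a : ℕ) (σ b : ℕ) = - gsgn (σ b : ℕ) (σ a : ℕ) := by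
    unfold gsgn; split_ifs <;> omega
  linarith

namespace OBP

variable (P : OBP n)

private def nstart (c : Fin n) : ℕ := ∑ r ∈ Finset.Iio c, P.k (P.σ.symm r)

private lemma sum_Iio_add_le (f : Fin n → ℕ) {p : Fin n} {s : Finset (Fin n)}
    (hs : ∀ r, r ≤ p → r ∈ s) : (∑ r ∈ Finset.Iio p, f r) + f p ≤ ∑ r ∈ s, f r := by
  have h1 : insert p (Finset.Iio p) ⊆ s := by
    intro r hr
    rcases Finset.mem_insert.mp hr with rfl | hr
    · exact hs r le_rfl
    · exact hs r (le_of_lt (Finset.mem_Iio.mp hr))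
  have h2 := Finset.sum_le_sum_of_subset (f := f) h1
  rw [Finset.sum_insert (by simp)] at h2
  omega

private lemma start_add {p q : Fin n} (h : p < q) : P.start p + P.k p ≤ P.start q := by
  simp only [OBP.start]
  exact sum_Iio_add_le P.k (fun r hr => Finset.mem_Iio.mpr (lt_of_le_of_lt hr h))

private lemma start_add_K (p : Fin n) : P.start p + P.k p ≤ P.K := by
  simp only [OBP.start, OBP.K]
  exact sum_Iio_add_le P.k (fun r _ => Finset.mem_univ r)

private lemma nstart_add {p q : Fin n} (h : p < q) :
    P.nstart p + P.k (P.σ.symm p) ≤ P.nstart q := by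
  simp only [OBP.nstart]
  exact sum_Iio_add_le (fun r => P.k (P.σ.symm r))
    (fun r hr => Finset.mem_Iio.mpr (lt_of_le_of_lt hr h))

private lemma nstart_add_K (p : Fin n) : P.nstart p + P.k (P.σ.symm p) ≤ P.K := by
  have h1 : P.nstart p + P.k (P.σ.symm p) ≤ ∑ r, P.k (P.σ.symm r) := by
    simp only [OBP.nstart]
    exact sum_Iio_add_le (fun r => P.k (P.σ.symm r)) (fun r _ => Finset.mem_univ r)
  calc P.nstart p + P.k (P.σ.symm p) ≤ ∑ r, P.k (P.σ.symm r) := h1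
    _ = P.K := Equiv.sum_comp P.σ.symm P.k

private lemma mem_B_iff {x : ℕ} {p : Fin n} :
    x ∈ P.B p ↔ P.start p + 1 ≤ x ∧ x ≤ P.start p + P.k p := by
  show x ∈ Finset.Icc _ _ ↔ _
  exact Finset.mem_Icc

private lemma bounds_of_mem {x : ℕ} {p : Fin n} (hx : x ∈ P.B p) : 1 ≤ x ∧ x ≤ P.K := by
  rw [mem_B_iff] at hx
  have := P.start_add_K p
  omega

private lemma n_le_K : n ≤ P.K := by
  have h : ∑ _i : Fin n, 1 ≤ ∑ i : Fin n, P.k i := Finset.sum_le_sum (fun i _ => P.hk i)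
  simpa [OBP.K] using h

private lemma beta_mem {x : ℕ} (h1 : 1 ≤ x) (h2 : x ≤ P.K) : x ∈ P.B (P.β x) := by
  obtain ⟨ha, hb⟩ := P.hβ x h1 h2
  rw [mem_B_iff]
  simp only [OBP.start]
  omega

private lemma B_disjoint {x : ℕ} {p q : Fin n} (hx : x ∈ P.B p) (hy : x ∈ P.B q) : p = q := by
  rcases lt_trichotomy p q with h | h | h
  · have := P.start_add h; rw [mem_B_iff] at hx hy; omega
  · exact h
  · have := P.start_add h; rw [mem_B_iff] at hx hy; omega

private lemma beta_eq {x : ℕ} {p : Fin n} (hx : x ∈ P.B p) : P.β x = p := by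
  obtain ⟨h1, h2⟩ := P.bounds_of_mem hx
  exact P.B_disjoint (P.beta_mem h1 h2) hx

private lemma tau_spec {x : ℕ} {p : Fin n} (hx : x ∈ P.B p) :
    P.τ x = P.nstart (P.σ p) + (x - P.start p) := by
  obtain ⟨h1, h2⟩ := P.bounds_of_mem hx
  have h3 := P.hτ x h1 h2
  rw [P.beta_eq hx] at h3
  rw [mem_B_iff] at hx
  simp only [OBP.nstart, OBP.start] at *
  omega

private lemma tau_mem {x : ℕ} {p : Fin n} (hx : x ∈ P.B p) :
    P.nstart (P.σ p) + 1 ≤ P.τ x ∧ P.τ x ≤ P.nstart (P.σ p) + P.k p := by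
  have h := P.tau_spec hx
  rw [mem_B_iff] at hx
  omega

private lemma tau_bounds {x : ℕ} {p : Fin n} (hx : x ∈ P.B p) : 1 ≤ P.τ x ∧ P.τ x ≤ P.K := by
  have h := P.tau_mem hx
  have h2 := P.nstart_add_K (P.σ p)
  rw [Equiv.symm_apply_apply] at h2
  omega

private lemma lt_of_block_lt {x y : ℕ} {p q : Fin n} (hx : x ∈ P.B p) (hy : y ∈ P.B q)
    (h : p < q) : x < y := by
  have := P.start_add h; rw [mem_B_iff] at hx hy; omega

private lemma tau_lt_of_lt {x y : ℕ} {p q : Fin n} (hx : x ∈ P.B p) (hy : y ∈ P.B q)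
    (h : P.σ p < P.σ q) : P.τ x < P.τ y := by
  have h1 := P.tau_mem hx
  have h2 := P.tau_mem hy
  have h3 := P.nstart_add h
  rw [Equiv.symm_apply_apply] at h3
  omega

private lemma tau_inj {x y : ℕ} {p q : Fin n} (hx : x ∈ P.B p) (hy : y ∈ P.B q)
    (h : P.τ x = P.τ y) : x = y := by
  rcases lt_trichotomy (P.σ p) (P.σ q) with h' | h' | h'
  · exact absurd h (Nat.ne_of_lt (P.tau_lt_of_lt hx hy h'))
  · have hpq : p = q := P.σ.injective h'
    subst hpq
    have t1 := P.tau_spec hx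
    have t2 := P.tau_spec hy
    rw [mem_B_iff] at hx hy
    omega
  · exact absurd h.symm (Nat.ne_of_lt (P.tau_lt_of_lt hy hx h'))

private lemma key {x y : ℕ} (hx1 : 1 ≤ x) (hxK : x ≤ P.K) (hy1 : 1 ≤ y) (hyK : y ≤ P.K) :
    2 * interMatrix P.σ (P.β x) (P.β y) = gsgn x y - gsgn (P.τ x) (P.τ y) := by
  rw [interMatrix_mul_two]
  have hx := P.beta_mem hx1 hxK
  have hy := P.beta_mem hy1 hyK
  rcases eq_or_ne (P.β x) (P.β y) with hpq | hpq
  · have hy' : y ∈ P.B (P.β x) := hpq ▸ hy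
    have t1 := P.tau_spec hx
    have t2 := P.tau_spec hy'
    have hgg : gsgn x y = gsgn (P.τ x) (P.τ y) := by
      rw [mem_B_iff] at hx hy'
      exact gsgn_congr (by omega) (by omega)
    rw [hpq, hgg]
    have : gsgn (P.β y : ℕ) (P.β y : ℕ) = 0 := by unfold gsgn; split_ifs <;> omega
    rw [this]
    have : gsgn (P.σ (P.β y) : ℕ) (P.σ (P.β y) : ℕ) = 0 := by unfold gsgn; split_ifs <;> omega
    rw [this]
    ring
  · have hσ : P.σ (P.β x) ≠ P.σ (P.β y) := fun h => hpq (P.σ.injective h)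
    have h1 : (P.β x : ℕ) < (P.β y : ℕ) → x < y :=
      fun h => P.lt_of_block_lt hx hy (Fin.lt_def.mpr h)
    have h2 : (P.β y : ℕ) < (P.β x : ℕ) → y < x :=
      fun h => P.lt_of_block_lt hy hx (Fin.lt_def.mpr h)
    have h3 : (P.σ (P.β x) : ℕ) < (P.σ (P.β y) : ℕ) → P.τ x < P.τ y :=
      fun h => P.tau_lt_of_lt hx hy (Fin.lt_def.mpr h)
    have h4 : (P.σ (P.β y) : ℕ) < (P.σ (P.β x) : ℕ) → P.τ y < P.τ x :=
      fun h => P.tau_lt_of_lt hy hx (Fin.lt_def.mpr h)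
    have h5 : (P.β x : ℕ) ≠ (P.β y : ℕ) := fun h => hpq (Fin.val_injective h)
    have h6 : (P.σ (P.β x) : ℕ) ≠ (P.σ (P.β y) : ℕ) := fun h => hσ (Fin.val_injective h)
    unfold gsgn
    split_ifs <;> omega

end OBP

end Aux

section Aux2

open Finset

variable {n : ℕ} {P : OBP n} (D : OrbitData P)

private lemma orbit_bounds (i : Fin n) :
    ∀ t, t ≤ D.m i → 1 ≤ P.τ^[t] (strand i) ∧ P.τ^[t] (strand i) ≤ P.K := by
  intro t
  induction t with
  | zero =>
    intro _
    simp only [Function.iterate_zero_apply, strand]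
    have h1 := P.n_le_K
    have h2 := i.isLt
    omega
  | succ t ih =>
    intro ht
    have h := ih (by omega)
    rw [Function.iterate_succ_apply']
    exact P.tau_bounds (P.beta_mem h.1 h.2)

private lemma iter_inj (i : Fin n) :
    ∀ t u, t < D.m i → u < D.m i → P.τ^[t] (strand i) = P.τ^[u] (strand i) → t = u := by
  intro t
  induction t with
  | zero =>
    intro u _ hu h
    by_contra hne
    have h1 : 1 ≤ u := by omega
    apply D.hm_min i u h1 hu
    rw [← h, Function.iterate_zero_apply]
    have := i.isLt
    simp only [strand]
    omega
  | succ t ih =>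
    intro u ht hu h
    cases u with
    | zero =>
      exfalso
      apply D.hm_min i (t + 1) (by omega) ht
      rw [h, Function.iterate_zero_apply]
      have := i.isLt
      simp only [strand]
      omega
    | succ u =>
      rw [Function.iterate_succ_apply', Function.iterate_succ_apply'] at h
      have hb1 := orbit_bounds D i t (by omega)
      have hb2 := orbit_bounds D i u (by omega)
      have heq := P.tau_inj (P.beta_mem hb1.1 hb1.2) (P.beta_mem hb2.1 hb2.2) h
      rw [ih u (by omega) (by omega) heq]

private lemma A_cast (i p : Fin n) :
    (D.A i p : ℤ) = ∑ t ∈ Finset.range (D.m i),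
      (if P.τ^[t] (strand i) ∈ P.B p then (1 : ℤ) else 0) := by
  have himg : D.O i ∩ P.B p =
      ((Finset.range (D.m i)).filter (fun t => P.τ^[t] (strand i) ∈ P.B p)).image
        (fun t => P.τ^[t] (strand i)) := by
    ext a
    simp only [Finset.mem_inter, OrbitData.O, Finset.mem_image, Finset.mem_filter]
    constructor
    · rintro ⟨⟨t, ht, rfl⟩, hmem⟩; exact ⟨t, ⟨ht, hmem⟩, rfl⟩
    · rintro ⟨t, ⟨ht, hmem⟩, rfl⟩; exact ⟨⟨t, ht, rfl⟩, hmem⟩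
  show (((D.O i ∩ P.B p).card : ℕ) : ℤ) = _
  rw [himg, Finset.card_image_of_injOn, Finset.card_filter]
  · push_cast
    rfl
  · intro a ha b hb hab
    simp only [Finset.coe_filter, Set.mem_setOf_eq, Finset.mem_range] at ha hb
    exact iter_inj D i a b ha.1 hb.1 hab

private lemma row_expand (i : Fin n) (v : Fin n → ℤ) :
    ∑ p, (D.A i p : ℤ) * v p =
      ∑ t ∈ Finset.range (D.m i), v (P.β (P.τ^[t] (strand i))) := by
  simp only [A_cast, Finset.sum_mul, ite_mul, one_mul, zero_mul]
  rw [Finset.sum_comm]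
  refine Finset.sum_congr rfl fun t ht => ?_
  have hb := orbit_bounds D i t (le_of_lt (Finset.mem_range.mp ht))
  have h := Finset.sum_eq_single (s := Finset.univ)
    (f := fun q => if P.τ^[t] (strand i) ∈ P.B q then v q else 0)
    (P.β (P.τ^[t] (strand i)))
    (fun q _ hq => if_neg (fun hmem => hq (P.beta_eq hmem).symm))
    (fun habs => absurd (Finset.mem_univ _) habs)
  rw [h]
  simp only [if_pos (P.beta_mem hb.1 hb.2)]

private lemma entry_eq (i j : Fin n) :
    ((D.A.map (Nat.cast : ℕ → ℤ)) * interMatrix P.σ *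
        (D.A.map (Nat.cast : ℕ → ℤ)).transpose) i j
      = ∑ t ∈ Finset.range (D.m i), ∑ u ∈ Finset.range (D.m j),
          interMatrix P.σ (P.β (P.τ^[t] (strand i))) (P.β (P.τ^[u] (strand j))) := by
  rw [Matrix.mul_apply]
  simp only [Matrix.mul_apply, Matrix.transpose_apply, Matrix.map_apply]
  calc ∑ q, (∑ p, (D.A i p : ℤ) * interMatrix P.σ p q) * (D.A j q : ℤ)
      = ∑ q, (D.A j q : ℤ) *
          (∑ t ∈ Finset.range (D.m i), interMatrix P.σ (P.β (P.τ^[t] (strand i))) q) := by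
        refine Finset.sum_congr rfl fun q _ => ?_
        rw [row_expand D i (fun p => interMatrix P.σ p q), mul_comm]
    _ = ∑ t ∈ Finset.range (D.m i),
          ∑ q, (D.A j q : ℤ) * interMatrix P.σ (P.β (P.τ^[t] (strand i))) q := by
        simp only [Finset.mul_sum]
        rw [Finset.sum_comm]
    _ = _ := by
        refine Finset.sum_congr rfl fun t _ => ?_
        exact row_expand D j (fun q => interMatrix P.σ (P.β (P.τ^[t] (strand i))) q)

end Aux2

section Aux3

open Finset

variable {n : ℕ} {P : OBP n} (D : OrbitData P)

private lemma strand_le (a : Fin n) : strand a ≤ n := a.isLt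

private lemma gsgn_strand (σ : Equiv.Perm (Fin n)) (a b : Fin n) :
    gsgn (strand a) (strand b) - gsgn (strand (σ a)) (strand (σ b)) = 2 * interMatrix σ a b := by
  rw [interMatrix_mul_two]
  have e : ∀ (c d : Fin n), gsgn (strand c) (strand d) = gsgn (c : ℕ) (d : ℕ) := by
    intro c d
    unfold strand
    exact gsgn_congr (by omega) (by omega)
  rw [e, e]

private lemma telescope (hFR : ∀ a, P.τ^[D.m a] (strand a) = strand (P.σ a)) (i j : Fin n) :
    (2 : ℤ) * (∑ t ∈ Finset.range (D.m i), ∑ u ∈ Finset.range (D.m j),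
      interMatrix P.σ (P.β (P.τ^[t] (strand i))) (P.β (P.τ^[u] (strand j))))
      = 2 * interMatrix P.σ i j := by
  have hbig_i : ∀ t, 1 ≤ t → t < D.m i → n < P.τ^[t] (strand i) := by
    intro t h1 h2
    have := D.hm_min i t h1 h2
    omega
  have hbig_j : ∀ u, 1 ≤ u → u < D.m j → n < P.τ^[u] (strand j) := by
    intro u h1 h2
    have := D.hm_min j u h1 h2
    omega
  have piece1 : ∑ t ∈ range (D.m i), ∑ u ∈ range (D.m j),
      (gsgn (P.τ^[t] (strand i)) (P.τ^[u] (strand j))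
        - gsgn (P.τ^[t+1] (strand i)) (P.τ^[u] (strand j)))
      = gsgn (strand i) (strand j) - gsgn (strand (P.σ i)) (strand j) := by
    rw [Finset.sum_comm]
    have inner : ∀ u, (∑ t ∈ range (D.m i),
        (gsgn (P.τ^[t] (strand i)) (P.τ^[u] (strand j))
          - gsgn (P.τ^[t+1] (strand i)) (P.τ^[u] (strand j))))
        = gsgn (strand i) (P.τ^[u] (strand j))
          - gsgn (strand (P.σ i)) (P.τ^[u] (strand j)) := by
      intro u
      have h := Finset.sum_range_sub'
        (fun t => gsgn (P.τ^[t] (strand i)) (P.τ^[u] (strand j))) (D.m i)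
      rw [h, Function.iterate_zero_apply, hFR i]
    simp only [inner]
    rw [Finset.sum_eq_single 0
      (by
        intro u hu hne
        have h1u : n < P.τ^[u] (strand j) := hbig_j u (by omega) (Finset.mem_range.mp hu)
        have gi : gsgn (strand i) (P.τ^[u] (strand j)) = 1 :=
          gsgn_lt (by have := strand_le i; omega)
        have gσ : gsgn (strand (P.σ i)) (P.τ^[u] (strand j)) = 1 :=
          gsgn_lt (by have := strand_le (P.σ i); omega)
        rw [gi, gσ]
        ring)
      (fun h => absurd (Finset.mem_range.mpr (D.hm_pos j)) h)]
    rw [Function.iterate_zero_apply]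
  have piece2 : ∑ t ∈ range (D.m i), ∑ u ∈ range (D.m j),
      (gsgn (P.τ^[t+1] (strand i)) (P.τ^[u] (strand j))
        - gsgn (P.τ^[t+1] (strand i)) (P.τ^[u+1] (strand j)))
      = gsgn (strand (P.σ i)) (strand j) - gsgn (strand (P.σ i)) (strand (P.σ j)) := by
    have inner : ∀ t, (∑ u ∈ range (D.m j),
        (gsgn (P.τ^[t+1] (strand i)) (P.τ^[u] (strand j))
          - gsgn (P.τ^[t+1] (strand i)) (P.τ^[u+1] (strand j))))
        = gsgn (P.τ^[t+1] (strand i)) (strand j)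
          - gsgn (P.τ^[t+1] (strand i)) (strand (P.σ j)) := by
      intro t
      have h := Finset.sum_range_sub'
        (fun u => gsgn (P.τ^[t+1] (strand i)) (P.τ^[u] (strand j))) (D.m j)
      rw [h, Function.iterate_zero_apply, hFR j]
    simp only [inner]
    rw [Finset.sum_eq_single (D.m i - 1)
      (by
        intro t ht hne
        have hmem := Finset.mem_range.mp ht
        have h1t : n < P.τ^[t+1] (strand i) := hbig_i (t+1) (by omega) (by omega)
        have gi : gsgn (P.τ^[t+1] (strand i)) (strand j) = -1 :=
          gsgn_gt (by have := strand_le j; omega)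
        have gσ : gsgn (P.τ^[t+1] (strand i)) (strand (P.σ j)) = -1 :=
          gsgn_gt (by have := strand_le (P.σ j); omega)
        rw [gi, gσ]
        ring)
      (fun h => absurd (Finset.mem_range.mpr (by have := D.hm_pos i; omega)) h)]
    rw [show D.m i - 1 + 1 = D.m i from by have := D.hm_pos i; omega, hFR i]
  calc (2 : ℤ) * (∑ t ∈ Finset.range (D.m i), ∑ u ∈ Finset.range (D.m j),
      interMatrix P.σ (P.β (P.τ^[t] (strand i))) (P.β (P.τ^[u] (strand j))))
      = ∑ t ∈ range (D.m i), ∑ u ∈ range (D.m j),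
          2 * interMatrix P.σ (P.β (P.τ^[t] (strand i))) (P.β (P.τ^[u] (strand j))) := by
        simp only [Finset.mul_sum]
    _ = ∑ t ∈ range (D.m i), ∑ u ∈ range (D.m j),
        ((gsgn (P.τ^[t] (strand i)) (P.τ^[u] (strand j))
            - gsgn (P.τ^[t+1] (strand i)) (P.τ^[u] (strand j)))
          + (gsgn (P.τ^[t+1] (strand i)) (P.τ^[u] (strand j))
            - gsgn (P.τ^[t+1] (strand i)) (P.τ^[u+1] (strand j)))) := by
        refine Finset.sum_congr rfl fun t ht => Finset.sum_congr rfl fun u hu => ?_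
        have hbx := orbit_bounds D i t (le_of_lt (Finset.mem_range.mp ht))
        have hby := orbit_bounds D j u (le_of_lt (Finset.mem_range.mp hu))
        rw [show (t+1) = t.succ from rfl, show (u+1) = u.succ from rfl,
          Function.iterate_succ_apply', Function.iterate_succ_apply',
          P.key hbx.1 hbx.2 hby.1 hby.2]
        ring
    _ = _ := by
        simp only [Finset.sum_add_distrib]
        rw [piece1, piece2]
        have := gsgn_strand P.σ i j
        linarith

end Aux3

/-- `S` is antisymmetric, and for the matrix `A` of a right-admissible OBP
(arising from an OF pseudo-Anosov map as in the paper), `A S Aᵀ = S`. -/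
theorem obp_symplectic {n : ℕ} (hn : 0 < n) (P : OBP n) (D : OrbitData P)
    (hadm : Admissible hn P D)
    (hright : P.bot (lastIdx n hn) ∈ D.O (P.σ.symm (lastIdx n hn)) ∧
      P.bot (P.σ.symm (lastIdx n hn)) ∈ D.O (P.σ.symm (lastIdx n hn))) :
    (interMatrix P.σ).transpose = -interMatrix P.σ ∧
    (D.A.map (Nat.cast : ℕ → ℤ)) * interMatrix P.σ * (D.A.map (Nat.cast : ℕ → ℤ)).transpose =
      interMatrix P.σ := by
  constructor
  · exact interMatrix_transpose P.σ
  · ext i j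
    rw [entry_eq D i j]
    exact mul_left_cancel₀ (by norm_num : (2:ℤ) ≠ 0) (telescope D hadm.firstRet i j)
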